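/- Let n ≥ 3 be an integer. There exists ε₀ > 0 such that for every ε ∈ (0, ε₀) and every ρ ∈ (ε, 1), one has Q_ε(ρ) > 0, where Q_ε is the polynomial associated with the parameter choices α(ε), β(ε), γ(ε), δ(ε). -/

import Mathlib

/-!
Regard Q as a polynomial `Qpoly n d g` in ρ with free parameters d, g in place of δ(ε), γ(ε).
For all parameters Q(1) = Q'(1) = 0 and Q'' = ρ^(n-3) · C(ρ) with a cubic C, while γ(ε) and
δ(ε) solve the linear system Q(ε) = 0, Q'(ε) = ε^(n-2)(1-ε) ≥ 0. As ε → 0 the parameters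
tend to (-n(n+1), 0), where Q = ρ^(n-1)(1-ρ)² and C = n(n+1)ρ² - 2n(n-1)ρ + (n-1)(n-2) is
positive on [0, 1/7] and on [1 - 1/(4n), 1]. By compactness, for nearby parameters C stays
positive on these two intervals and Q stays positive between them. Near each end of [ε, 1],
Q is then strictly convex, vanishes at the endpoint and has its slope there pointing into the
interval, hence is positive.
-/

/-- δ(ε) as given in (4.6) of the paper. -/
noncomputable def deltaE (n : ℕ) (ε : ℝ) : ℝ :=
  (ε ^ (n - 2) * (1 - ε)
    - ((-(n : ℝ) * ε ^ (n + 1) + ((n : ℝ) + 1) * ε ^ n - 1) * ((n : ℝ) + 2)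
        * (-1 + ((n : ℝ) + 1) * ε / ((n : ℝ) - 1) - ε ^ (n - 1)
            + ((n : ℝ) - 3) * ε ^ n / ((n : ℝ) - 1)))
      / (-(n : ℝ) * ε ^ (n + 2) + ((n : ℝ) + 2) * ε ^ (n + 1) + (n : ℝ) - ((n : ℝ) + 2) * ε)
    + ((n : ℝ) * ((n : ℝ) - 3) / ((n : ℝ) - 1)) * ε ^ (n - 1)
    - ((n : ℝ) - 1) * ε ^ (n - 2) + ((n : ℝ) + 1) / ((n : ℝ) - 1)) *
  (((-(n : ℝ) * ε ^ (n + 1) + ((n : ℝ) + 1) * ε ^ n - 1) * ((n : ℝ) + 2))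
      / (-(n : ℝ) * ε ^ (n + 2) + ((n : ℝ) + 2) * ε ^ (n + 1) + (n : ℝ) - ((n : ℝ) + 2) * ε)
      * ((ε ^ (n + 1) - 1) / ((n : ℝ) * ((n : ℝ) + 1))
          + (ε - ε ^ n) / ((n : ℝ) * ((n : ℝ) - 1)))
    + (-((n : ℝ) - 1) * ε ^ n + (n : ℝ) * ε ^ (n - 1) - 1) / ((n : ℝ) * ((n : ℝ) - 1)))⁻¹

/-- γ(ε) as given in (4.5) of the paper. -/
noncomputable def gammaE (n : ℕ) (ε : ℝ) : ℝ :=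
  (n : ℝ) * ((n : ℝ) + 1) * ((n : ℝ) + 2) *
    (((ε ^ (n + 1) - 1) / ((n : ℝ) * ((n : ℝ) + 1))
        + (ε - ε ^ n) / ((n : ℝ) * ((n : ℝ) - 1))) * deltaE n ε
      - 1 + ((n : ℝ) + 1) / ((n : ℝ) - 1) * ε - ε ^ (n - 1)
      + ((n : ℝ) - 3) / ((n : ℝ) - 1) * ε ^ n)
    / (-(n : ℝ) * ε ^ (n + 2) + ((n : ℝ) + 2) * ε ^ (n + 1) + (n : ℝ) - ((n : ℝ) + 2) * ε)

/-- α(ε) as given in (4.3) of the paper. -/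
noncomputable def alphaE (n : ℕ) (ε : ℝ) : ℝ :=
  -1 - deltaE n ε / ((n : ℝ) * ((n : ℝ) + 1)) - gammaE n ε / (((n : ℝ) + 1) * ((n : ℝ) + 2))

/-- β(ε) as given in (4.4) of the paper. -/
noncomputable def betaE (n : ℕ) (ε : ℝ) : ℝ :=
  ((n : ℝ) + 1) / ((n : ℝ) - 1) + deltaE n ε / ((n : ℝ) * ((n : ℝ) - 1))
    + gammaE n ε / ((n : ℝ) * ((n : ℝ) + 1))

/-- The polynomial Q_ε(ρ) associated with the parameter choices α(ε), β(ε), γ(ε), δ(ε). -/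
noncomputable def Qe (n : ℕ) (ε : ℝ) (ρ : ℝ) : ℝ :=
  -gammaE n ε * ρ ^ (n + 2) / (((n : ℝ) + 1) * ((n : ℝ) + 2))
    - (deltaE n ε - gammaE n ε) * ρ ^ (n + 1) / ((n : ℝ) * ((n : ℝ) + 1))
    - (1 - (2 * (n : ℝ) + deltaE n ε) / ((n : ℝ) * ((n : ℝ) - 1))) * ρ ^ n
    + ρ ^ (n - 1) - alphaE n ε - betaE n ε * ρ

open Set Filter Topology

theorem strictConvexOn_of_hasDerivAt2_pos {D : Set ℝ} (hD : Convex ℝ D) {f f' f'' : ℝ → ℝ}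
    (hf : ∀ x, HasDerivAt f (f' x) x) (hf' : ∀ x, HasDerivAt f' (f'' x) x)
    (hf'' : ∀ x ∈ interior D, 0 < f'' x) : StrictConvexOn ℝ D f := by
  have hderiv : deriv f = f' := funext fun x => (hf x).deriv
  refine StrictMonoOn.strictConvexOn_of_deriv hD
    (fun x _ => (hf x).continuousAt.continuousWithinAt) ?_
  rw [hderiv]
  refine strictMonoOn_of_deriv_pos hD.interior
    (fun x _ => (hf' x).continuousAt.continuousWithinAt) fun x hx => ?_
  rw [(hf' x).deriv]
  exact hf'' x (interior_interior (s := D) ▸ hx)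

theorem pos_of_strictConvexOn_of_eq_zero_left {f : ℝ → ℝ} {f' a b x : ℝ}
    (hconv : StrictConvexOn ℝ (Icc a b) f) (hfa : HasDerivAt f f' a) (ha : f a = 0)
    (ha' : 0 ≤ f') (hx : x ∈ Ioc a b) : 0 < f x := by
  have h := hconv.lt_slope_of_hasDerivAt (left_mem_Icc.mpr (hx.1.le.trans hx.2))
    (Ioc_subset_Icc_self hx) hx.1 hfa
  rw [slope_def_field, ha, sub_zero, lt_div_iff₀ (sub_pos.mpr hx.1)] at h
  linarith [mul_nonneg ha' (sub_pos.mpr hx.1).le]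

theorem pos_of_strictConvexOn_of_eq_zero_right {f : ℝ → ℝ} {f' a b x : ℝ}
    (hconv : StrictConvexOn ℝ (Icc a b) f) (hfb : HasDerivAt f f' b) (hb : f b = 0)
    (hb' : f' ≤ 0) (hx : x ∈ Ico a b) : 0 < f x := by
  have h := hconv.slope_lt_of_hasDerivAt (Ico_subset_Icc_self hx)
    (right_mem_Icc.mpr (hx.1.trans hx.2.le)) hx.2 hfb
  rw [slope_def_field, hb, zero_sub, div_lt_iff₀ (sub_pos.mpr hx.2)] at h
  linarith [mul_nonpos_of_nonpos_of_nonneg hb' (sub_pos.mpr hx.2).le]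

theorem pos_on_Ioo_of_convex_near_ends {f f' f'' : ℝ → ℝ} {a l r b : ℝ}
    (hf : ∀ x, HasDerivAt f (f' x) x) (hf' : ∀ x, HasDerivAt f' (f'' x) x)
    (ha : f a = 0) (ha' : 0 ≤ f' a) (hb : f b = 0) (hb' : f' b ≤ 0)
    (hleft : ∀ x ∈ Ioo a l, 0 < f'' x) (hright : ∀ x ∈ Ioo r b, 0 < f'' x)
    (hmid : ∀ x ∈ Icc l r, 0 < f x) {x : ℝ} (hx : x ∈ Ioo a b) : 0 < f x := by
  rcases le_or_gt x l with hxl | hlx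
  · refine pos_of_strictConvexOn_of_eq_zero_left ?_ (hf a) ha ha' ⟨hx.1, hxl⟩
    exact strictConvexOn_of_hasDerivAt2_pos (convex_Icc a l) hf hf' (by rwa [interior_Icc])
  rcases le_or_gt r x with hrx | hxr
  · refine pos_of_strictConvexOn_of_eq_zero_right ?_ (hf b) hb hb' ⟨hrx, hx.2⟩
    exact strictConvexOn_of_hasDerivAt2_pos (convex_Icc r b) hf hf' (by rwa [interior_Icc])
  exact hmid x ⟨hlx.le, hxr.le⟩

theorem eventually_forall_pos_of_continuous {X Y : Type*} [TopologicalSpace X]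
    [TopologicalSpace Y] {f : X → Y → ℝ} (hf : Continuous (Function.uncurry f)) {K : Set Y}
    (hK : IsCompact K) {x₀ : X} (hpos : ∀ y ∈ K, 0 < f x₀ y) :
    ∀ᶠ x in 𝓝 x₀, ∀ y ∈ K, 0 < f x y :=
  hK.eventually_forall_of_forall_eventually fun y hy =>
    hf.continuousAt.eventually (lt_mem_nhds (hpos y hy))

theorem natCast_sub_one_ne_zero {n : ℕ} (hn : 2 ≤ n) : (n : ℝ) - 1 ≠ 0 :=
  sub_ne_zero.mpr (by norm_cast; omega)

noncomputable def alphaOf (n : ℕ) (d g : ℝ) : ℝ :=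
  -1 - d / ((n : ℝ) * ((n : ℝ) + 1)) - g / (((n : ℝ) + 1) * ((n : ℝ) + 2))

noncomputable def betaOf (n : ℕ) (d g : ℝ) : ℝ :=
  ((n : ℝ) + 1) / ((n : ℝ) - 1) + d / ((n : ℝ) * ((n : ℝ) - 1)) + g / ((n : ℝ) * ((n : ℝ) + 1))

noncomputable def Qpoly (n : ℕ) (d g ρ : ℝ) : ℝ :=
  -g * ρ ^ (n + 2) / (((n : ℝ) + 1) * ((n : ℝ) + 2))
    - (d - g) * ρ ^ (n + 1) / ((n : ℝ) * ((n : ℝ) + 1))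
    - (1 - (2 * (n : ℝ) + d) / ((n : ℝ) * ((n : ℝ) - 1))) * ρ ^ n
    + ρ ^ (n - 1) - alphaOf n d g - betaOf n d g * ρ

noncomputable def Qpoly' (n : ℕ) (d g ρ : ℝ) : ℝ :=
  -g * ρ ^ (n + 1) / ((n : ℝ) + 1) - (d - g) * ρ ^ n / (n : ℝ)
    - (1 - (2 * (n : ℝ) + d) / ((n : ℝ) * ((n : ℝ) - 1))) * (n : ℝ) * ρ ^ (n - 1)
    + ((n : ℝ) - 1) * ρ ^ (n - 2) - betaOf n d g

def Qcubic (n : ℕ) (d g ρ : ℝ) : ℝ :=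
  -g * ρ ^ 3 + (g - d) * ρ ^ 2 + (d - (n : ℝ) * ((n : ℝ) - 3)) * ρ
    + ((n : ℝ) - 1) * ((n : ℝ) - 2)

theorem Qe_eq_Qpoly (n : ℕ) (ε ρ : ℝ) : Qe n ε ρ = Qpoly n (deltaE n ε) (gammaE n ε) ρ := rfl

section Family

variable {n : ℕ} {d g : ℝ}

theorem hasDerivAt_Qpoly (hn : 1 ≤ n) (ρ : ℝ) : HasDerivAt (Qpoly n d g) (Qpoly' n d g ρ) ρ := by
  unfold Qpoly
  refine (((((((((hasDerivAt_pow _ ρ).const_mul _).div_const _).fun_sub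
    (((hasDerivAt_pow _ ρ).const_mul _).div_const _)).fun_sub
    ((hasDerivAt_pow _ ρ).const_mul _)).fun_add (hasDerivAt_pow _ ρ)).fun_sub
    (hasDerivAt_const ρ _)).fun_sub ((hasDerivAt_id' ρ).const_mul _))).congr_deriv ?_
  simp only [Qpoly', betaOf]
  field_simp
  obtain ⟨k, rfl⟩ := Nat.exists_eq_add_of_le' hn
  simp only [Nat.reduceSubDiff, Nat.add_sub_cancel]
  push_cast
  ring

theorem hasDerivAt_Qpoly' (hn : 3 ≤ n) (ρ : ℝ) :
    HasDerivAt (Qpoly' n d g) (ρ ^ (n - 3) * Qcubic n d g ρ) ρ := by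
  unfold Qpoly'
  refine ((((((((hasDerivAt_pow _ ρ).const_mul _).div_const _).fun_sub
    (((hasDerivAt_pow _ ρ).const_mul _).div_const _)).fun_sub
    ((hasDerivAt_pow _ ρ).const_mul _)).fun_add
    ((hasDerivAt_pow _ ρ).const_mul _)).fun_sub (hasDerivAt_const ρ _))).congr_deriv ?_
  have := natCast_sub_one_ne_zero (by omega : 2 ≤ n)
  simp only [Qcubic]
  field_simp
  obtain ⟨k, rfl⟩ := Nat.exists_eq_add_of_le' hn
  simp only [Nat.reduceSubDiff, Nat.add_sub_cancel]
  push_cast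
  ring

theorem Qpoly_one (hn : 2 ≤ n) : Qpoly n d g 1 = 0 := by
  have := natCast_sub_one_ne_zero hn
  simp only [Qpoly, alphaOf, betaOf, one_pow]
  field_simp
  ring

theorem Qpoly'_one (hn : 2 ≤ n) : Qpoly' n d g 1 = 0 := by
  have := natCast_sub_one_ne_zero hn
  simp only [Qpoly', betaOf, one_pow]
  field_simp
  ring

theorem Qpoly_limit (hn : 2 ≤ n) (ρ : ℝ) :
    Qpoly n (-(n * (n + 1))) 0 ρ = ρ ^ (n - 1) * (1 - ρ) ^ 2 := by
  have := natCast_sub_one_ne_zero hn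
  simp only [Qpoly, alphaOf, betaOf]
  field_simp
  obtain ⟨k, rfl⟩ := Nat.exists_eq_add_of_le' hn
  simp only [Nat.reduceSubDiff]
  push_cast
  ring

theorem Qcubic_limit_pos_of_le {ρ : ℝ} (hn : 3 ≤ n) (hρ : ρ ≤ 1 / 7) :
    0 < Qcubic n (-(n * (n + 1))) 0 ρ := by
  have h3 : (3 : ℝ) ≤ n := by exact_mod_cast hn
  have hn1 : (0 : ℝ) ≤ n * (n - 1) := by nlinarith
  simp only [Qcubic]
  nlinarith [mul_nonneg hn1 (sub_nonneg.mpr hρ),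
    mul_nonneg (by positivity : (0 : ℝ) ≤ n * (n + 1)) (sq_nonneg ρ)]

theorem Qcubic_limit_pos_of_ge {ρ : ℝ} (hn : 1 ≤ n) (hρ : 1 - 1 / (4 * n : ℝ) ≤ ρ) :
    0 < Qcubic n (-(n * (n + 1))) 0 ρ := by
  have ht : 4 * n * (1 - ρ) ≤ 1 := by
    rw [sub_le_iff_le_add, ← sub_le_iff_le_add'] at hρ
    calc 4 * n * (1 - ρ) ≤ 4 * n * (1 / (4 * n)) := by gcongr
      _ = 1 := by field_simp
  have hC : Qcubic n (-(n * (n + 1))) 0 ρ = 2 - 4 * n * (1 - ρ) + n * (n + 1) * (1 - ρ) ^ 2 := by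
    simp only [Qcubic]; ring
  rw [hC]
  nlinarith [sq_nonneg (1 - ρ)]

end Family

theorem exists_eventually_Qcubic_pos_and_Qpoly_pos (n : ℕ) (hn : 3 ≤ n) :
    ∃ l r : ℝ, 0 < l ∧ 0 < r ∧ ∀ᶠ p : ℝ × ℝ in 𝓝 (-(n * (n + 1)), 0),
      (∀ ρ ∈ Icc 0 l, 0 < Qcubic n p.1 p.2 ρ) ∧ (∀ ρ ∈ Icc r 1, 0 < Qcubic n p.1 p.2 ρ) ∧
      ∀ ρ ∈ Icc l r, 0 < Qpoly n p.1 p.2 ρ := by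
  have hr : (0 : ℝ) < 1 - 1 / (4 * n) := by
    have : (3 : ℝ) ≤ n := by exact_mod_cast hn
    rw [sub_pos, div_lt_one (by positivity)]
    linarith
  have hC : Continuous (Function.uncurry fun (p : ℝ × ℝ) ρ => Qcubic n p.1 p.2 ρ) := by
    unfold Qcubic; fun_prop
  have hQ : Continuous (Function.uncurry fun (p : ℝ × ℝ) ρ => Qpoly n p.1 p.2 ρ) := by
    unfold Qpoly alphaOf betaOf; fun_prop
  refine ⟨1 / 7, 1 - 1 / (4 * n), by norm_num, hr,
    (eventually_forall_pos_of_continuous hC isCompact_Icc ?_).and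
    ((eventually_forall_pos_of_continuous hC isCompact_Icc ?_).and
      (eventually_forall_pos_of_continuous hQ isCompact_Icc ?_))⟩
  · exact fun ρ hρ => Qcubic_limit_pos_of_le hn hρ.2
  · exact fun ρ hρ => Qcubic_limit_pos_of_ge (by omega) hρ.1
  · intro ρ hρ
    have hρ1 : ρ < 1 := hρ.2.trans_lt (sub_lt_self 1 (by positivity))
    rw [Qpoly_limit (by omega)]
    exact mul_pos (pow_pos ((by norm_num : (0 : ℝ) < 1 / 7).trans_le hρ.1) _)
      (pow_pos (sub_pos.mpr hρ1) 2)

noncomputable def gammaDen (n : ℕ) (ε : ℝ) : ℝ :=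
  -(n : ℝ) * ε ^ (n + 2) + ((n : ℝ) + 2) * ε ^ (n + 1) + (n : ℝ) - ((n : ℝ) + 2) * ε

noncomputable def gammaOf (n : ℕ) (ε d : ℝ) : ℝ :=
  (n : ℝ) * ((n : ℝ) + 1) * ((n : ℝ) + 2) *
    (((ε ^ (n + 1) - 1) / ((n : ℝ) * ((n : ℝ) + 1))
        + (ε - ε ^ n) / ((n : ℝ) * ((n : ℝ) - 1))) * d
      - 1 + ((n : ℝ) + 1) / ((n : ℝ) - 1) * ε - ε ^ (n - 1)
      + ((n : ℝ) - 3) / ((n : ℝ) - 1) * ε ^ n)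
    / gammaDen n ε

noncomputable def deltaNum (n : ℕ) (ε : ℝ) : ℝ :=
  ε ^ (n - 2) * (1 - ε)
    - ((-(n : ℝ) * ε ^ (n + 1) + ((n : ℝ) + 1) * ε ^ n - 1) * ((n : ℝ) + 2)
        * (-1 + ((n : ℝ) + 1) * ε / ((n : ℝ) - 1) - ε ^ (n - 1)
            + ((n : ℝ) - 3) * ε ^ n / ((n : ℝ) - 1)))
      / gammaDen n ε
    + ((n : ℝ) * ((n : ℝ) - 3) / ((n : ℝ) - 1)) * ε ^ (n - 1)
    - ((n : ℝ) - 1) * ε ^ (n - 2) + ((n : ℝ) + 1) / ((n : ℝ) - 1)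

noncomputable def deltaDen (n : ℕ) (ε : ℝ) : ℝ :=
  ((-(n : ℝ) * ε ^ (n + 1) + ((n : ℝ) + 1) * ε ^ n - 1) * ((n : ℝ) + 2)) / gammaDen n ε
      * ((ε ^ (n + 1) - 1) / ((n : ℝ) * ((n : ℝ) + 1))
          + (ε - ε ^ n) / ((n : ℝ) * ((n : ℝ) - 1)))
    + (-((n : ℝ) - 1) * ε ^ n + (n : ℝ) * ε ^ (n - 1) - 1) / ((n : ℝ) * ((n : ℝ) - 1))

theorem gammaE_eq (n : ℕ) (ε : ℝ) : gammaE n ε = gammaOf n ε (deltaE n ε) := rfl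

theorem deltaE_eq (n : ℕ) (ε : ℝ) : deltaE n ε = deltaNum n ε * (deltaDen n ε)⁻¹ := rfl

section AtEps

variable {n : ℕ} {ε : ℝ}

theorem Qpoly_gammaOf (hn : 2 ≤ n) (hγ : gammaDen n ε ≠ 0) (d : ℝ) :
    Qpoly n d (gammaOf n ε d) ε = 0 := by
  have := natCast_sub_one_ne_zero hn
  simp only [Qpoly, gammaOf, alphaOf, betaOf]
  field_simp
  unfold gammaDen
  obtain ⟨k, rfl⟩ := Nat.exists_eq_add_of_le' hn
  simp only [Nat.reduceSubDiff]
  push_cast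
  ring

theorem Qpoly'_gammaOf (hn : 2 ≤ n) (hγ : gammaDen n ε ≠ 0) (d : ℝ) :
    Qpoly' n d (gammaOf n ε d) ε = d * deltaDen n ε - deltaNum n ε + ε ^ (n - 2) * (1 - ε) := by
  have := natCast_sub_one_ne_zero hn
  simp only [Qpoly', gammaOf, betaOf, deltaNum, deltaDen]
  field_simp
  unfold gammaDen
  obtain ⟨k, rfl⟩ := Nat.exists_eq_add_of_le' hn
  simp only [Nat.reduceSubDiff, Nat.add_sub_cancel]
  push_cast
  ring

theorem Qpoly_gammaE_self (hn : 2 ≤ n) (hγ : gammaDen n ε ≠ 0) :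
    Qpoly n (deltaE n ε) (gammaE n ε) ε = 0 :=
  Qpoly_gammaOf hn hγ _

theorem Qpoly'_deltaE_self (hn : 2 ≤ n) (hγ : gammaDen n ε ≠ 0) (hδ : deltaDen n ε ≠ 0) :
    Qpoly' n (deltaE n ε) (gammaE n ε) ε = ε ^ (n - 2) * (1 - ε) := by
  rw [gammaE_eq, Qpoly'_gammaOf hn hγ, deltaE_eq, inv_mul_cancel_right₀ hδ]
  ring

end AtEps

section NearZero

variable {n : ℕ}

@[fun_prop]
theorem continuous_gammaDen (n : ℕ) : Continuous (gammaDen n) := by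
  unfold gammaDen
  fun_prop

theorem gammaDen_zero : gammaDen n 0 = n := by
  simp [gammaDen]

theorem gammaDen_zero_ne (hn : n ≠ 0) : gammaDen n 0 ≠ 0 := by
  rw [gammaDen_zero]
  exact_mod_cast hn

theorem deltaNum_zero (hn : 3 ≤ n) : deltaNum n 0 = 2 / (n * (n - 1)) := by
  have := natCast_sub_one_ne_zero (by omega : 2 ≤ n)
  simp only [deltaNum, gammaDen_zero, zero_pow (show n - 2 ≠ 0 by omega),
    zero_pow (show n - 1 ≠ 0 by omega), zero_pow (show n ≠ 0 by omega), zero_pow n.succ_ne_zero]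
  field_simp
  ring

theorem deltaDen_zero (hn : 2 ≤ n) : deltaDen n 0 = -2 / (n ^ 2 * (n + 1) * (n - 1)) := by
  have := natCast_sub_one_ne_zero hn
  simp only [deltaDen, gammaDen_zero, zero_pow (show n - 1 ≠ 0 by omega),
    zero_pow (show n ≠ 0 by omega), zero_pow n.succ_ne_zero]
  field_simp
  ring

theorem deltaDen_zero_ne (hn : 2 ≤ n) : deltaDen n 0 ≠ 0 := by
  have := natCast_sub_one_ne_zero hn
  rw [deltaDen_zero hn]
  positivity

theorem deltaE_zero (hn : 3 ≤ n) : deltaE n 0 = -(n * (n + 1)) := by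
  have := natCast_sub_one_ne_zero (by omega : 2 ≤ n)
  rw [deltaE_eq, deltaNum_zero hn, deltaDen_zero (by omega)]
  field_simp

theorem gammaE_zero (hn : 3 ≤ n) : gammaE n 0 = 0 := by
  rw [gammaE_eq, deltaE_zero hn]
  simp only [gammaOf, gammaDen_zero, zero_pow (show n - 1 ≠ 0 by omega),
    zero_pow (show n ≠ 0 by omega), zero_pow n.succ_ne_zero]
  field_simp
  ring

theorem continuousAt_deltaNum (hn : n ≠ 0) : ContinuousAt (deltaNum n) 0 := by
  have h := gammaDen_zero_ne hn
  unfold deltaNum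
  fun_prop (disch := exact h)

theorem continuousAt_deltaDen (hn : n ≠ 0) : ContinuousAt (deltaDen n) 0 := by
  have h := gammaDen_zero_ne hn
  unfold deltaDen
  fun_prop (disch := exact h)

theorem continuousAt_deltaE (hn : 2 ≤ n) : ContinuousAt (deltaE n) 0 :=
  (continuousAt_deltaNum (by omega)).mul
    ((continuousAt_deltaDen (by omega)).inv₀ (deltaDen_zero_ne hn))

theorem continuousAt_gammaE (hn : 2 ≤ n) : ContinuousAt (gammaE n) 0 := by
  have h := gammaDen_zero_ne (by omega : n ≠ 0)
  have hδ := continuousAt_deltaE hn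
  show ContinuousAt (fun ε => gammaOf n ε (deltaE n ε)) 0
  unfold gammaOf
  fun_prop (disch := exact h)

theorem eventually_gammaDen_ne_and_deltaDen_ne (hn : 2 ≤ n) :
    ∀ᶠ ε in 𝓝 (0 : ℝ), gammaDen n ε ≠ 0 ∧ deltaDen n ε ≠ 0 :=
  ((continuous_gammaDen n).continuousAt.eventually_ne (gammaDen_zero_ne (by omega))).and
    ((continuousAt_deltaDen (by omega)).eventually_ne (deltaDen_zero_ne hn))

end NearZero

/-- Lemma 4.8: Q_ε(ρ) > 0 for all ρ ∈ (ε, 1), if ε is sufficiently small. -/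
theorem Qe_pos (n : ℕ) (hn : 3 ≤ n) :
    ∃ ε₀ > (0 : ℝ), ∀ ε : ℝ, 0 < ε → ε < ε₀ →
      ∀ ρ : ℝ, ε < ρ → ρ < 1 → Qe n ε ρ > 0 := by
  have hn2 : 2 ≤ n := by omega
  obtain ⟨l, r, hl, hr, hshape⟩ := exists_eventually_Qcubic_pos_and_Qpoly_pos n hn
  have hlim : Tendsto (fun ε => (deltaE n ε, gammaE n ε)) (𝓝 0) (𝓝 (-(n * (n + 1)), 0)) := by
    simpa only [deltaE_zero hn, gammaE_zero hn] using
      ((continuousAt_deltaE hn2).prodMk (continuousAt_gammaE hn2)).tendsto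
  obtain ⟨ε₀, hε₀, hgood⟩ := Metric.eventually_nhds_iff.mp <| (hlim.eventually hshape).and <|
    (eventually_gammaDen_ne_and_deltaDen_ne hn2).and (eventually_lt_nhds hl)
  refine ⟨ε₀, hε₀, fun ε hε hεε₀ ρ hερ hρ1 => ?_⟩
  obtain ⟨⟨hleft, hright, hmid⟩, ⟨hγ, hδ⟩, hεl⟩ :=
    hgood (by rwa [Real.dist_0_eq_abs, abs_of_pos hε])
  rw [gt_iff_lt, Qe_eq_Qpoly]
  refine pos_on_Ioo_of_convex_near_ends (hasDerivAt_Qpoly (by omega)) (hasDerivAt_Qpoly' hn)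
    (Qpoly_gammaE_self hn2 hγ) ?_ (Qpoly_one hn2) (Qpoly'_one hn2).le
    (fun x hx => ?_) (fun x hx => ?_) hmid ⟨hερ, hρ1⟩
  · rw [Qpoly'_deltaE_self hn2 hγ hδ]
    exact mul_nonneg (pow_nonneg hε.le _) (by linarith)
  · exact mul_pos (pow_pos (hε.trans hx.1) _) (hleft x ⟨(hε.trans hx.1).le, hx.2.le⟩)
  · exact mul_pos (pow_pos (hr.trans hx.1) _) (hright x (Ioo_subset_Icc_self hx))
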